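/- arXiv:1610.02022 — 7 statements merged into one kernel-verified Lean document; each statement's English description precedes it below -/
import Mathlib

section
/- Let F be a field and let L be a 2-dimensional subspace of F^6 such that q(v) ≠ 0 for every nonzero v ∈ L, where q is the Klein quadratic form, and let L^⊥ = {w ∈ F^6 : B(w,v) = 0 for all v ∈ L}. Let S be the set of 2-dimensional subspaces W of F^4 such that the Plücker vector p(a,b) of some (equivalently any) basis (a,b) of W lies in L^⊥. Then S is a spread of lines: (i) any two distinct members of S intersect only in {0}, and (ii) every nonzero vector of F^4 lies in some member of S. -/
/-- The Plücker vector of a pair of vectors of `F^4`. -/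
def plucker {F : Type*} [Field F] (a b : Fin 4 → F) : Fin 6 → F :=
  ![a 0 * b 1 - a 1 * b 0, a 0 * b 2 - a 2 * b 0, a 0 * b 3 - a 3 * b 0,
    a 1 * b 2 - a 2 * b 1, a 1 * b 3 - a 3 * b 1, a 2 * b 3 - a 3 * b 2]

/-- The Klein quadratic form on `F^6`. -/
def kleinQ {F : Type*} [Field F] (x : Fin 6 → F) : F :=
  x 0 * x 5 - x 1 * x 4 + x 2 * x 3

/-- The polar bilinear form of the Klein quadratic form. -/
def kleinB {F : Type*} [Field F] (x y : Fin 6 → F) : F :=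
  x 0 * y 5 + x 5 * y 0 - x 1 * y 4 - x 4 * y 1 + x 2 * y 3 + x 3 * y 2

/-! For `l ∈ F^6`, `(a, b) ↦ B(p(a, b), l)` is an alternating form on `F^4` whose Pfaffian
is `q(l)`, so it is nondegenerate when `q(l) ≠ 0`. Hence for `x ≠ 0` the functionals
`b ↦ B(p(x, b), v)`, `v ∈ L`, span a 2-dimensional space, and their common kernel `K_x` is a
plane containing `x`. Plücker vectors of pairs in a plane `W` are multiples of that of a basis,
so a member of `S` through `x` lies in `K_x` and therefore equals it: `K_x` is the unique member
of `S` through `x`. -/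

open Matrix Module

section Planes

variable {K V : Type*} [DivisionRing K] [AddCommGroup V] [Module K V]

lemma span_pair_eq_of_finrank_eq_two {W : Submodule K V} (hW : finrank K W = 2) {a b : V}
    (ha : a ∈ W) (hb : b ∈ W) (hab : LinearIndependent K ![a, b]) :
    Submodule.span K {a, b} = W := by
  have : FiniteDimensional K W := finite_of_finrank_eq_succ hW
  refine Submodule.eq_of_le_of_finrank_eq (Submodule.span_le.2 (Set.insert_subset ha
    (Set.singleton_subset_iff.2 hb))) ?_
  rw [hW, ← range_cons_cons_empty, finrank_span_eq_card hab, Fintype.card_fin]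

lemma exists_linearIndependent_pair_mem {W : Submodule K V} (hW : 1 < finrank K W) {x : V}
    (hx : x ∈ W) (hx0 : x ≠ 0) : ∃ b ∈ W, LinearIndependent K ![x, b] := by
  obtain ⟨b, hb⟩ := exists_linearIndependent_pair_of_one_lt_finrank hW
    (x := ⟨x, hx⟩) (by simpa using hx0)
  refine ⟨b, b.2, ?_⟩
  have h := hb.map' W.subtype W.ker_subtype
  rwa [show W.subtype ∘ ![⟨x, hx⟩, b] = ![x, (b : V)] by ext i; fin_cases i <;> rfl] at h

end Planes

section KleinPlucker

variable {F : Type*} [Field F]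

lemma kleinB_smul_left (t : F) (p v : Fin 6 → F) : kleinB (t • p) v = t * kleinB p v := by
  simp only [kleinB, Pi.smul_apply, smul_eq_mul]; ring

lemma plucker_self (a : Fin 4 → F) : plucker a a = 0 := by
  ext i; fin_cases i <;> simp [plucker, mul_comm]

lemma plucker_linearCombination (a b : Fin 4 → F) (α β γ δ : F) :
    plucker (α • a + β • b) (γ • a + δ • b) = (α * δ - β * γ) • plucker a b := by
  ext i; fin_cases i <;> simp [plucker] <;> ring

/- The matrix lists `l` in Plücker order; it is `kleinQ l` times the inverse of the Gram matrix
of the alternating form `(a, b) ↦ kleinB (plucker a b) l`, whose Pfaffian is `kleinQ l`. -/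
lemma kleinQ_smul_eq_mulVec (l : Fin 6 → F) (x : Fin 4 → F) :
    kleinQ l • x = !![0, l 0, l 1, l 2; -l 0, 0, l 3, l 4; -l 1, -l 3, 0, l 5;
      -l 2, -l 4, -l 5, 0] *ᵥ fun j => kleinB (plucker x (Pi.single j 1)) l := by
  ext i
  fin_cases i <;> simp [kleinQ, kleinB, plucker, mulVec, dotProduct, Fin.sum_univ_four] <;> ring

lemma eq_zero_of_kleinB_plucker_eq_zero {l : Fin 6 → F} (hl : kleinQ l ≠ 0) {x : Fin 4 → F}
    (hx : ∀ b, kleinB (plucker x b) l = 0) : x = 0 := by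
  have h := kleinQ_smul_eq_mulVec l x
  rw [show (fun j => kleinB (plucker x (Pi.single j 1)) l) = 0 from funext fun j => hx _,
    mulVec_zero, smul_eq_zero] at h
  exact h.resolve_left hl

def kleinPairing (x : Fin 4 → F) : (Fin 6 → F) →ₗ[F] Module.Dual F (Fin 4 → F) :=
  LinearMap.mk₂ F (fun l b => kleinB (plucker x b) l)
    (fun _ _ _ => by simp only [kleinB, Pi.add_apply]; ring)
    (fun _ _ _ => by simp only [kleinB, Pi.smul_apply, smul_eq_mul]; ring)
    (fun _ _ _ => by
      simp only [kleinB, plucker, Pi.add_apply, cons_val_zero, cons_val, cons_val_one]; ring)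
    (fun _ _ _ => by
      simp only [kleinB, plucker, Pi.smul_apply, smul_eq_mul, cons_val_zero, cons_val,
        cons_val_one]
      ring)

def pluckerPerp (L : Submodule F (Fin 6 → F)) (x : Fin 4 → F) : Submodule F (Fin 4 → F) :=
  (L.map (kleinPairing x)).dualCoannihilator

variable {L : Submodule F (Fin 6 → F)} {x : Fin 4 → F}

lemma mem_pluckerPerp {b : Fin 4 → F} :
    b ∈ pluckerPerp L x ↔ ∀ v ∈ L, kleinB (plucker x b) v = 0 := by
  simp [pluckerPerp, kleinPairing]

lemma self_mem_pluckerPerp : x ∈ pluckerPerp L x :=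
  mem_pluckerPerp.2 fun v _ => by simp [plucker_self, kleinB]

lemma finrank_add_finrank_pluckerPerp (hq : ∀ v ∈ L, v ≠ 0 → kleinQ v ≠ 0) (hx : x ≠ 0) :
    finrank F L + finrank F (pluckerPerp L x) = 4 := by
  have hinj : Set.InjOn (kleinPairing x) L := by
    refine LinearMap.disjoint_ker_iff_injOn.1 (LinearMap.disjoint_ker.2 fun v hv hv0 => ?_)
    by_contra hne
    exact hx (eq_zero_of_kleinB_plucker_eq_zero (hq v hv hne) (LinearMap.congr_fun hv0))
  rw [(LinearEquiv.ofBijective _ ⟨LinearMap.submoduleMap_injective_of_injOn hinj,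
    LinearMap.submoduleMap_surjective _ _⟩).finrank_eq, pluckerPerp,
    Subspace.finrank_add_finrank_dualCoannihilator_eq, finrank_fin_fun]

lemma le_pluckerPerp {W : Submodule F (Fin 4 → F)} (hW : finrank F W = 2) {a b : Fin 4 → F}
    (ha : a ∈ W) (hb : b ∈ W) (hab : LinearIndependent F ![a, b])
    (hperp : ∀ v ∈ L, kleinB (plucker a b) v = 0) (hx : x ∈ W) : W ≤ pluckerPerp L x := by
  intro c hc
  rw [← span_pair_eq_of_finrank_eq_two hW ha hb hab] at hx hc
  obtain ⟨α, β, rfl⟩ := Submodule.mem_span_pair.1 hx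
  obtain ⟨γ, δ, rfl⟩ := Submodule.mem_span_pair.1 hc
  refine mem_pluckerPerp.2 fun v hv => ?_
  rw [plucker_linearCombination, kleinB_smul_left, hperp v hv, mul_zero]

end KleinPlucker

/-- Let `L` be a 2-dimensional subspace of `F^6` on which the Klein quadratic form does not
vanish at any nonzero vector. Then the set `S` of 2-dimensional subspaces of `F^4` whose
Plücker vectors lie in `L^⊥` is a spread of lines: distinct members of `S` intersect
trivially, and every nonzero vector of `F^4` lies in some member of `S`. -/
theorem spread_of_perp_section {F : Type*} [Field F]
    (L : Submodule F (Fin 6 → F))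
    (hL : Module.finrank F L = 2)
    (hq : ∀ v ∈ L, v ≠ 0 → kleinQ v ≠ 0)
    (S : Set (Submodule F (Fin 4 → F)))
    (hS : ∀ W : Submodule F (Fin 4 → F), W ∈ S ↔
      Module.finrank F W = 2 ∧
        ∃ a b : Fin 4 → F, a ∈ W ∧ b ∈ W ∧ LinearIndependent F ![a, b] ∧
          ∀ v ∈ L, kleinB (plucker a b) v = 0) :
    (∀ W₁ ∈ S, ∀ W₂ ∈ S, W₁ ≠ W₂ → W₁ ⊓ W₂ = ⊥) ∧
      (∀ x : Fin 4 → F, x ≠ 0 → ∃ W ∈ S, x ∈ W) := by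
  have finrank_perp {x : Fin 4 → F} (hx : x ≠ 0) : finrank F (pluckerPerp L x) = 2 := by
    have := finrank_add_finrank_pluckerPerp hq hx
    omega
  have eq_perp {W} (hW : W ∈ S) {x} (hx : x ∈ W) (hx0 : x ≠ 0) : W = pluckerPerp L x := by
    obtain ⟨hW2, a, b, ha, hb, hab, hperp⟩ := (hS W).1 hW
    exact Submodule.eq_of_le_of_finrank_eq (le_pluckerPerp hW2 ha hb hab hperp hx)
      (by rw [hW2, finrank_perp hx0])
  refine ⟨fun W₁ h₁ W₂ h₂ hne => ?_, fun x hx => ⟨pluckerPerp L x, ?_, self_mem_pluckerPerp⟩⟩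
  · refine (Submodule.eq_bot_iff _).2 fun x hx => by_contra fun hx0 => hne ?_
    exact (eq_perp h₁ hx.1 hx0).trans (eq_perp h₂ hx.2 hx0).symm
  · obtain ⟨b, hb, hxb⟩ := exists_linearIndependent_pair_mem (by rw [finrank_perp hx]; omega)
      self_mem_pluckerPerp hx
    exact (hS _).2
      ⟨finrank_perp hx, x, b, self_mem_pluckerPerp, hb, hxb, mem_pluckerPerp.1 hb⟩
end

section
/- Let F be a field, let a=(a_0,…,a_5), b=(b_0,…,b_5) ∈ F^6, and let U = {y ∈ F^6 : a_0y_0+⋯+a_5y_5 = 0 and b_0y_0+⋯+b_5y_5 = 0}. Assume that the set S of 2-dimensional subspaces W of F^4 whose Plücker vector lies in U is a spread of lines of F^4. Let c ∈ S and let p = (p_0,p_1,p_2,p_3) be a nonzero vector of c. Then c = {X = (X_0,X_1,X_2,X_3) ∈ F^4 : (−a_0p_1−a_1p_2−a_2p_3)X_0 + (a_0p_0−a_3p_2−a_4p_3)X_1 + (a_1p_0+a_3p_1−a_5p_3)X_2 + (a_2p_0+a_4p_1+a_5p_2)X_3 = 0 and (−b_0p_1−b_1p_2−b_2p_3)X_0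 + (b_0p_0−b_3p_2−b_4p_3)X_1 + (b_1p_0+b_3p_1−b_5p_3)X_2 + (b_2p_0+b_4p_1+b_5p_2)X_3 = 0}. -/
lemma plucker_apply0 {F : Type*} [Field F] (a b : Fin 4 → F) :
    plucker a b 0 = a 0 * b 1 - a 1 * b 0 := rfl
lemma plucker_apply1 {F : Type*} [Field F] (a b : Fin 4 → F) :
    plucker a b 1 = a 0 * b 2 - a 2 * b 0 := rfl
lemma plucker_apply2 {F : Type*} [Field F] (a b : Fin 4 → F) :
    plucker a b 2 = a 0 * b 3 - a 3 * b 0 := rfl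
lemma plucker_apply3 {F : Type*} [Field F] (a b : Fin 4 → F) :
    plucker a b 3 = a 1 * b 2 - a 2 * b 1 := rfl
lemma plucker_apply4 {F : Type*} [Field F] (a b : Fin 4 → F) :
    plucker a b 4 = a 1 * b 3 - a 3 * b 1 := rfl
lemma plucker_apply5 {F : Type*} [Field F] (a b : Fin 4 → F) :
    plucker a b 5 = a 2 * b 3 - a 3 * b 2 := rfl

/-- The linear form `X ↦ ∑ aᵢ (p ∧ X)ᵢ` expanded in coordinates. -/
lemma sum_plucker_expand {F : Type*} [Field F] (a : Fin 6 → F) (p X : Fin 4 → F) :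
    (∑ i, a i * plucker p X i) =
      (-(a 0) * p 1 - a 1 * p 2 - a 2 * p 3) * X 0 +
        (a 0 * p 0 - a 3 * p 2 - a 4 * p 3) * X 1 +
        (a 1 * p 0 + a 3 * p 1 - a 5 * p 3) * X 2 +
        (a 2 * p 0 + a 4 * p 1 + a 5 * p 2) * X 3 := by
  simp only [Fin.sum_univ_six, plucker_apply0, plucker_apply1, plucker_apply2, plucker_apply3,
    plucker_apply4, plucker_apply5]
  ring

/-- Bilinearity/alternation of the Plücker pairing. -/
lemma sum_plucker_bilin {F : Type*} [Field F] (a : Fin 6 → F) (u v : Fin 4 → F)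
    (α β γ δ : F) :
    (∑ i, a i * plucker (α • u + β • v) (γ • u + δ • v) i) =
      (α * δ - β * γ) * ∑ i, a i * plucker u v i := by
  simp only [Fin.sum_univ_six, plucker_apply0, plucker_apply1, plucker_apply2, plucker_apply3,
    plucker_apply4, plucker_apply5, Pi.add_apply, Pi.smul_apply, smul_eq_mul]
  ring

lemma span_pair_finrank {F : Type*} [Field F] (u v : Fin 4 → F)
    (h : LinearIndependent F ![u, v]) :
    Module.finrank F (Submodule.span F {u, v}) = 2 := by
  have h2 : Set.range ![u, v] = {u, v} := by
    rw [Matrix.range_cons, Matrix.range_cons, Matrix.range_empty]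
    simp only [Set.union_empty, Set.singleton_union]
  have := finrank_span_eq_card h
  rw [h2] at this
  simpa using this

/-- Decoding a received point for a spread code cut out on the Klein quadric by the two
linear equations with coefficient vectors `a` and `b`: if the spread line `c` contains the
nonzero vector `p`, then `c` is cut out by the two displayed linear equations. -/
theorem decode_point_of_linear_spread {F : Type*} [Field F]
    (a b : Fin 6 → F)
    (S : Set (Submodule F (Fin 4 → F)))
    (hS : ∀ W : Submodule F (Fin 4 → F), W ∈ S ↔
      Module.finrank F W = 2 ∧
        ∃ u v : Fin 4 → F, u ∈ W ∧ v ∈ W ∧ LinearIndependent F ![u, v] ∧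
          (∑ i, a i * plucker u v i) = 0 ∧ (∑ i, b i * plucker u v i) = 0)
    (hdisj : ∀ W₁ ∈ S, ∀ W₂ ∈ S, W₁ ≠ W₂ → W₁ ⊓ W₂ = ⊥)
    (hcover : ∀ x : Fin 4 → F, x ≠ 0 → ∃ W ∈ S, x ∈ W)
    (c : Submodule F (Fin 4 → F)) (hc : c ∈ S)
    (p : Fin 4 → F) (hpc : p ∈ c) (hp : p ≠ 0) :
    (c : Set (Fin 4 → F)) = {X : Fin 4 → F |
      (-(a 0) * p 1 - a 1 * p 2 - a 2 * p 3) * X 0 +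
        (a 0 * p 0 - a 3 * p 2 - a 4 * p 3) * X 1 +
        (a 1 * p 0 + a 3 * p 1 - a 5 * p 3) * X 2 +
        (a 2 * p 0 + a 4 * p 1 + a 5 * p 2) * X 3 = 0 ∧
      (-(b 0) * p 1 - b 1 * p 2 - b 2 * p 3) * X 0 +
        (b 0 * p 0 - b 3 * p 2 - b 4 * p 3) * X 1 +
        (b 1 * p 0 + b 3 * p 1 - b 5 * p 3) * X 2 +
        (b 2 * p 0 + b 4 * p 1 + b 5 * p 2) * X 3 = 0} := by
  obtain ⟨hrank, u, v, hu, hv, hind, ha0, hb0⟩ := (hS c).mp hc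
  have hspan : Submodule.span F {u, v} = c := by
    apply Submodule.eq_of_le_of_finrank_le
    · rw [Submodule.span_le]; rintro x (rfl | rfl) <;> assumption
    · rw [hrank, span_pair_finrank u v hind]
  ext X
  constructor
  · intro hX
    obtain ⟨α, β, hαβ⟩ := Submodule.mem_span_pair.mp (hspan ▸ hpc)
    obtain ⟨γ, δ, hγδ⟩ := Submodule.mem_span_pair.mp (hspan ▸ (hX : X ∈ c))
    constructor
    · rw [← sum_plucker_expand, ← hαβ, ← hγδ, sum_plucker_bilin, ha0, mul_zero]
    · rw [← sum_plucker_expand, ← hαβ, ← hγδ, sum_plucker_bilin, hb0, mul_zero]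
  · rintro ⟨h1, h2⟩
    rw [← sum_plucker_expand] at h1 h2
    by_cases hXc : X ∈ c
    · exact hXc
    exfalso
    have hind2 : LinearIndependent F ![p, X] := by
      rw [LinearIndependent.pair_iff' hp]
      intro t ht
      exact hXc (ht ▸ c.smul_mem t hpc)
    have hW' : Submodule.span F {p, X} ∈ S := by
      rw [hS]
      exact ⟨span_pair_finrank p X hind2, p, X, Submodule.subset_span (by simp),
        Submodule.subset_span (by simp), hind2, h1, h2⟩
    have heq : Submodule.span F {p, X} = c := by
      by_contra hne
      have hbot := hdisj _ hW' _ hc hne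
      have hpmem : p ∈ Submodule.span F {p, X} ⊓ c :=
        ⟨Submodule.subset_span (by simp), hpc⟩
      rw [hbot, Submodule.mem_bot] at hpmem
      exact hp hpmem
    exact hXc (heq ▸ Submodule.subset_span (show X ∈ ({p, X} : Set _) by simp))
end

section
/- Let F be a field and let k < n+1 be natural numbers. Let A be a (k+1)×(n+1) matrix over F with linearly independent rows and B an (n−k)×(n+1) matrix over F with linearly independent rows, such that A·Bᵀ = 0 (so the row space of B is the annihilator of the row space of A under the standard bilinear pairing). Then there exists a nonzero λ ∈ F such that for every strictly increasing (k+1)-tuple i = (i_0,…,i_k) of indices in {0,…,n}, with complementary strictly increasing (n−k)-tuple i' = (i_{k+1},…,i_n), det(A restricted to columns i) = λ·ε_i·det(B restricted to columns i'), where ε_i = +1 if the concatenated sequence (i_0,…,i_k,i_{k+1},…,i_n) is an even permutation of (0,…,n) and ε_i = −1 if it is odd. -/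
/-!
Pick right inverses `A * G = 1` and `B * C = 1`. Since `A * Bᵀ = 0`, for every `Y` the block
product `[A; Y] * [G | Bᵀ] = [[1, 0], [Y * G, Y * Bᵀ]]` has determinant `det (Y * Bᵀ)`,
so `det [A; Y] = c * det (Y * Bᵀ)` with `c = (det [G | Bᵀ])⁻¹`; the choice `Y = Cᵀ` gives
`det (Cᵀ * Bᵀ) = 1`, so `det [G | Bᵀ] ≠ 0`. Taking for the rows of `Y` the unit vectors at
the complementary columns `j`, the columns `σ ∘ e` turn `[A; Y]` into `[[A_i, A_j], [0, 1]]`,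
whose determinant is `det A_i`, while `Y * Bᵀ = (B_j)ᵀ`; reordering the columns costs
`sign σ`.
-/

open Equiv

namespace Matrix

variable {ι κ m : Type*}

theorem exists_mul_eq_one_of_linearIndependent_row {F : Type*} [Field F] [Fintype ι]
    [DecidableEq ι] [Fintype m] [DecidableEq m] {A : Matrix ι m F}
    (hA : LinearIndependent F A.row) :
    ∃ G : Matrix m ι F, A * G = 1 := by
  obtain ⟨g, hg⟩ := A.vecMulLinear.exists_leftInverse_of_injective
    (LinearMap.ker_eq_bot.2 (vecMul_injective_iff.2 hA))
  refine ⟨(LinearMap.toMatrix' g)ᵀ, ?_⟩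
  rw [← transpose_one, ← transpose_transpose A, ← transpose_mul, transpose_inj]
  apply toLin'.injective
  rw [toLin'_mul, toLin'_toMatrix', toLin'_one, toLin'_apply', mulVecLin_transpose, hg]

theorem det_submatrix_id_perm_comp {R : Type*} [CommRing R] [Fintype ι] [DecidableEq ι]
    [Fintype m] [DecidableEq m] (M : Matrix ι m R) (e : ι ≃ m) (σ : Perm m) :
    (M.submatrix id (σ ∘ e)).det = Perm.sign σ * (M.submatrix id e).det := by
  have h := det_permute' σ (M.submatrix e.symm id)
  rw [← det_submatrix_equiv_self e, ← det_submatrix_equiv_self e (M.submatrix e.symm id)] at h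
  simpa only [submatrix_submatrix, Function.comp_id, Function.id_comp, e.symm_comp_self] using h

theorem exists_det_fromRows_submatrix_eq_mul_det_mul_transpose {F : Type*} [Field F]
    [Fintype ι] [DecidableEq ι] [Fintype κ] [DecidableEq κ] [Fintype m]
    [DecidableEq m] (A : Matrix ι m F) (B : Matrix κ m F) (e : ι ⊕ κ ≃ m)
    (hA : LinearIndependent F A.row) (hB : LinearIndependent F B.row) (hAB : A * Bᵀ = 0) :
    ∃ c ≠ 0, ∀ Y : Matrix κ m F,
      ((fromRows A Y).submatrix id e).det = c * (Y * Bᵀ).det := by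
  obtain ⟨G, hG⟩ := exists_mul_eq_one_of_linearIndependent_row hA
  obtain ⟨C, hC⟩ := exists_mul_eq_one_of_linearIndependent_row hB
  have hprod : ∀ Y : Matrix κ m F, ((fromRows A Y).submatrix id e).det *
      ((fromCols G Bᵀ).submatrix e id).det = (Y * Bᵀ).det := fun Y => by
    rw [← det_mul, submatrix_mul_equiv, fromRows_mul_fromCols, hG, hAB, submatrix_id_id,
      det_fromBlocks_zero₁₂, det_one, one_mul]
  have hdual : ((fromCols G Bᵀ).submatrix e id).det ≠ 0 := fun h => by
    simpa [h, ← transpose_mul, hC] using hprod Cᵀ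
  refine ⟨_, inv_ne_zero hdual, fun Y => ?_⟩
  rw [← hprod Y, mul_comm, mul_inv_cancel_right₀ hdual]

theorem det_fromRows_one_submatrix_sumElim {R : Type*} [CommRing R] [Fintype ι]
    [DecidableEq ι] [Fintype κ] [DecidableEq κ] [DecidableEq m] (A : Matrix ι m R)
    (i : ι → m) (j : κ → m) (hij : Function.Injective (Sum.elim i j)) :
    ((fromRows A ((1 : Matrix m m R).submatrix j id)).submatrix id (Sum.elim i j)).det =
      (A.submatrix id i).det := by
  obtain ⟨-, hj, hij⟩ := Sum.elim_injective.1 hij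
  have hblocks : (fromRows A ((1 : Matrix m m R).submatrix j id)).submatrix id (Sum.elim i j) =
      fromBlocks (A.submatrix id i) (A.submatrix id j) 0 1 := by
    ext (r | r) (s | s) <;> simp [one_apply, hij, hj.eq_iff, eq_comm]
  rw [hblocks, det_fromBlocks_zero₂₁, det_one, mul_one]

theorem one_submatrix_mul_transpose {R : Type*} [CommRing R] [Fintype m] [DecidableEq m]
    (B : Matrix ι m R) (j : κ → m) :
    (1 : Matrix m m R).submatrix j id * Bᵀ = (B.submatrix id j)ᵀ := by
  ext
  simp [mul_apply, one_apply]

end Matrix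

open Matrix

/-- Up to a global nonzero scalar and a sign given by the permutation concatenating the
column indices with their complement, the primary Plücker coordinates (maximal minors of a
matrix `A` whose rows span a subspace) equal the dual Plücker coordinates (complementary
maximal minors of a matrix `B` whose rows cut out the same subspace). -/
theorem primary_dual_pluecker_relation {F : Type*} [Field F]
    (k n : ℕ) (hkn : k < n + 1)
    (A : Matrix (Fin (k + 1)) (Fin (n + 1)) F)
    (B : Matrix (Fin (n - k)) (Fin (n + 1)) F)
    (hA : LinearIndependent F (fun r : Fin (k + 1) => A r))
    (hB : LinearIndependent F (fun r : Fin (n - k) => B r))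
    (hAB : A * B.transpose = 0) :
    ∃ l : F, l ≠ 0 ∧
      ∀ (i : Fin (k + 1) → Fin (n + 1)) (j : Fin (n - k) → Fin (n + 1))
        (σ : Equiv.Perm (Fin (n + 1))),
        StrictMono i → StrictMono j →
        (∀ s : Fin (k + 1),
          σ (finCongr (show k + 1 + (n - k) = n + 1 by omega) (finSumFinEquiv (Sum.inl s)))
            = i s) →
        (∀ s : Fin (n - k),
          σ (finCongr (show k + 1 + (n - k) = n + 1 by omega) (finSumFinEquiv (Sum.inr s)))
            = j s) →
        (A.submatrix id i).det =
          l * ((Equiv.Perm.sign σ : ℤ) : F) * (B.submatrix id j).det := by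
  set e := finSumFinEquiv.trans (finCongr (show k + 1 + (n - k) = n + 1 by omega))
  obtain ⟨c, hc, hdet⟩ := exists_det_fromRows_submatrix_eq_mul_det_mul_transpose A B e hA hB hAB
  refine ⟨c, hc, fun i j σ _ _ hσi hσj => ?_⟩
  have hσe : σ ∘ e = Sum.elim i j := funext <| Sum.rec hσi hσj
  calc (A.submatrix id i).det
      = ((fromRows A ((1 : Matrix _ _ F).submatrix j id)).submatrix id (σ ∘ e)).det := by
        rw [hσe, det_fromRows_one_submatrix_sumElim A i j (hσe ▸ σ.injective.comp e.injective)]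
    _ = Perm.sign σ * (c * (B.submatrix id j)ᵀ.det) := by
        rw [det_submatrix_id_perm_comp, hdet, one_submatrix_mul_transpose]
    _ = c * Perm.sign σ * (B.submatrix id j).det := by
        rw [det_transpose]; ring
end

section
/- Let F be a field, k ≥ 1, V = F^{2k+2}, and let x_0,…,x_{k−1} ∈ V be linearly independent with x = span{x_0,…,x_{k−1}}. Let ω = x_0 ∧ ⋯ ∧ x_{k−1} ∈ ⋀^k V and let W = {ω ∧ v : v ∈ V} ⊆ ⋀^{k+1} V (the image of the linear map v ↦ ω ∧ v). Then: (i) W is a linear subspace of ⋀^{k+1} V of dimension k+2; (ii) every element of W is totally decomposable; (iii) for linearly independent v_0,…,v_k ∈ V, the vector v_0 ∧ ⋯ ∧ v_k lies in W if and only if x ⊆ span{v_0,…,v_k}. In other words, the Plücker coordinates of the k-dimensional projective subspaces of PG(2k+1,F) containing the fixed (k−1)-dimensional projective subspace ℙ(x) are exactly the nonzero points of a (k+1)-dimensional projective subspace contained in the Plücker embedding of the Grassmannian G_F(k+1,2k+2). -/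
/-!
Wedging with `ω = x₀ ∧ ⋯ ∧ x_{k-1}` kills exactly `span x`, because a wedge of linearly
independent vectors is nonzero; rank–nullity then gives `dim W = (2k+2) - k`, and every
`ω ∧ y = x₀ ∧ ⋯ ∧ x_{k-1} ∧ y` is decomposable. If `v₀ ∧ ⋯ ∧ v_k = ω ∧ y`, wedging it with any
`x_j` gives zero, so `x_j ∈ span v`. Conversely, if `span x ≤ span v`, some `y ∈ span v`
completes `x` to a basis of `span v`, and `v₀ ∧ ⋯ ∧ v_k` is a determinant multiple of `ω ∧ y`.
-/

theorem AlternatingMap.map_eq_basis_det_smul {R M N ι : Type*} [CommRing R] [AddCommGroup M]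
    [Module R M] [AddCommGroup N] [Module R N] [Fintype ι] [DecidableEq ι]
    (e : Module.Basis ι R M) (g : M [⋀^ι]→ₗ[R] N) (v : ι → M) :
    g v = e.det v • g e := by
  suffices g = (LinearMap.toSpanSingleton R N (g e)).compAlternatingMap e.det by
    conv_lhs => rw [this]
    rfl
  refine e.ext_alternating fun i hi => ?_
  let σ : Equiv.Perm ι := Equiv.ofBijective i (Finite.injective_iff_bijective.1 hi)
  change g (e ∘ σ) = e.det (e ∘ σ) • g e
  simp [AlternatingMap.map_perm, Module.Basis.det_self]

namespace ExteriorAlgebra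

open Submodule

section CommRing

variable {R M : Type*} [CommRing R] [AddCommGroup M] [Module R M]

theorem ιMulti_snoc {m : ℕ} (u : Fin m → M) (y : M) :
    ιMulti R (m + 1) (Fin.snoc u y) = ιMulti R m u * ι R y := by
  rw [ιMulti_apply, ιMulti_apply, List.ofFn_succ']
  simp

theorem span_le_ker_mulLeft_ιMulti_comp_ι {m : ℕ} (u : Fin m → M) :
    span R (Set.range u) ≤ LinearMap.ker (LinearMap.mulLeft R (ιMulti R m u) ∘ₗ ι R) := by
  rw [span_le, Set.range_subset_iff]
  intro i
  rw [SetLike.mem_coe, LinearMap.mem_ker, LinearMap.comp_apply, LinearMap.mulLeft_apply,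
    ← ιMulti_snoc]
  exact (ιMulti R (m + 1)).map_eq_zero_of_eq _ (i := i.castSucc) (j := Fin.last m)
    (by simp) (Fin.castSucc_lt_last i).ne

end CommRing

variable {K E : Type*} [Field K] [AddCommGroup E] [Module K E]

theorem ιMulti_ne_zero_of_linearIndependent {m : ℕ} {u : Fin m → E}
    (hu : LinearIndependent K u) : ιMulti K m u ≠ 0 := by
  have := (exteriorPower.ιMulti_family_linearIndependent_field m hu).ne_zero
    (Set.powersetCard.ofFinEmbEquiv (RelEmbedding.refl (· ≤ ·)))
  simp only [exteriorPower.ιMulti_family, Equiv.symm_apply_apply] at this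
  rwa [ne_eq, ← Submodule.coe_eq_zero, exteriorPower.ιMulti_apply_coe] at this

theorem ker_mulLeft_ιMulti_comp_ι {m : ℕ} {u : Fin m → E} (hu : LinearIndependent K u) :
    LinearMap.ker (LinearMap.mulLeft K (ιMulti K m u) ∘ₗ ι K) = span K (Set.range u) := by
  refine le_antisymm (fun y hy => ?_) (span_le_ker_mulLeft_ιMulti_comp_ι u)
  by_contra hyu
  exact ιMulti_ne_zero_of_linearIndependent (linearIndependent_finSnoc.2 ⟨hu, hyu⟩)
    (by rwa [ιMulti_snoc])

theorem finrank_range_mulLeft_ιMulti_comp_ι_add [FiniteDimensional K E] {m : ℕ}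
    {u : Fin m → E} (hu : LinearIndependent K u) :
    Module.finrank K ↥(LinearMap.range (LinearMap.mulLeft K (ιMulti K m u) ∘ₗ ι K)) + m =
      Module.finrank K E := by
  have := (LinearMap.mulLeft K (ιMulti K m u) ∘ₗ ι K).finrank_range_add_finrank_ker
  rwa [ker_mulLeft_ιMulti_comp_ι hu, finrank_span_eq_card hu, Fintype.card_fin] at this

theorem exists_ιMulti_eq_smul_of_forall_mem_span {n : ℕ} {v w : Fin n → E}
    (hw : LinearIndependent K w) (hv : ∀ i, v i ∈ span K (Set.range w)) :
    ∃ c : K, ιMulti K n v = c • ιMulti K n w := by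
  let e := Module.Basis.span hw
  refine ⟨e.det fun i => ⟨v i, hv i⟩, ?_⟩
  have hew : (fun i => (e i : E)) = w := funext fun i => by simp [e, Module.Basis.span_apply]
  have := ((ιMulti K n).compLinearMap (span K (Set.range w)).subtype).map_eq_basis_det_smul e
    fun i => ⟨v i, hv i⟩
  simpa [AlternatingMap.compLinearMap_apply, hew] using this

theorem span_le_of_ιMulti_eq_ιMulti_mul_ι {m n : ℕ} {x : Fin m → E} {v : Fin n → E}
    (hv : LinearIndependent K v) {y : E} (h : ιMulti K n v = ιMulti K m x * ι K y) :
    span K (Set.range x) ≤ span K (Set.range v) := by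
  intro z hz
  have hxz : ιMulti K m x * ι K z = 0 := span_le_ker_mulLeft_ιMulti_comp_ι x hz
  rw [← ker_mulLeft_ιMulti_comp_ι hv, LinearMap.mem_ker, LinearMap.comp_apply,
    LinearMap.mulLeft_apply, h, mul_assoc, eq_neg_of_add_eq_zero_left (ι_add_mul_swap y z),
    mul_neg, ← mul_assoc, hxz, zero_mul, neg_zero]

theorem exists_ιMulti_eq_ιMulti_mul_ι_of_span_le {m : ℕ} {x : Fin m → E}
    {v : Fin (m + 1) → E} (hx : LinearIndependent K x) (hv : LinearIndependent K v)
    (h : span K (Set.range x) ≤ span K (Set.range v)) :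
    ∃ y, ιMulti K (m + 1) v = ιMulti K m x * ι K y := by
  obtain ⟨y, hyv, hyx⟩ := SetLike.exists_of_lt <| h.lt_of_ne fun heq => by
    simpa [finrank_span_eq_card hx, finrank_span_eq_card hv] using
      congrArg (fun U : Submodule K E => Module.finrank K U) heq
  have hxy : LinearIndependent K (Fin.snoc x y) := linearIndependent_finSnoc.2 ⟨hx, hyx⟩
  have hspan : span K (Set.range (Fin.snoc x y)) = span K (Set.range v) := by
    have := FiniteDimensional.span_of_finite K (Set.finite_range v)
    refine eq_of_le_of_finrank_eq (span_le.2 (Set.range_subset_iff.2 fun i => ?_))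
      (by rw [finrank_span_eq_card hxy, finrank_span_eq_card hv])
    induction i using Fin.lastCases with
    | last => simpa using hyv
    | cast i => simpa using h (subset_span ⟨i, rfl⟩)
  obtain ⟨c, hc⟩ := exists_ιMulti_eq_smul_of_forall_mem_span (v := v) hxy
    fun i => hspan ▸ subset_span ⟨i, rfl⟩
  exact ⟨c • y, by rw [hc, ιMulti_snoc, map_smul, mul_smul_comm]⟩

end ExteriorAlgebra

open ExteriorAlgebra in
theorem schubert_through_fixed_subspace_is_linear_general {F : Type*} [Field F]
    (k : ℕ)
    (x : Fin k → (Fin (2 * k + 2) → F))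
    (hx : LinearIndependent F x)
    (ω : ExteriorAlgebra F (Fin (2 * k + 2) → F))
    (hω : ω = (List.ofFn fun i => ι F (x i)).prod)
    (W : Submodule F (ExteriorAlgebra F (Fin (2 * k + 2) → F)))
    (hW : W = LinearMap.range ((LinearMap.mulLeft F ω) ∘ₗ
      (ι F : (Fin (2 * k + 2) → F) →ₗ[F] ExteriorAlgebra F (Fin (2 * k + 2) → F)))) :
    Module.finrank F W = k + 2 ∧
    (∀ w ∈ W, ∃ v : Fin (k + 1) → (Fin (2 * k + 2) → F),
      w = (List.ofFn fun i => ι F (v i)).prod) ∧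
    (∀ v : Fin (k + 1) → (Fin (2 * k + 2) → F), LinearIndependent F v →
      ((List.ofFn fun i => ι F (v i)).prod ∈ W ↔
        Submodule.span F (Set.range x) ≤ Submodule.span F (Set.range v))) := by
  simp only [← ιMulti_apply] at hω ⊢
  subst hω hW
  refine ⟨?_, ?_, fun v hv => ⟨fun ⟨y, hy⟩ => span_le_of_ιMulti_eq_ιMulti_mul_ι hv hy.symm,
    fun h => ?_⟩⟩
  · have := finrank_range_mulLeft_ιMulti_comp_ι_add hx
    rw [Module.finrank_fin_fun] at this
    omega
  · rintro _ ⟨y, rfl⟩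
    exact ⟨Fin.snoc x y, (ιMulti_snoc x y).symm⟩
  · obtain ⟨y, hy⟩ := exists_ιMulti_eq_ιMulti_mul_ι_of_span_le hx hv h
    exact ⟨y, hy.symm⟩

open ExteriorAlgebra in
/-- Let `x₀, …, x_{k−1}` be linearly independent vectors of `V = F^{2k+2}` (`k ≥ 1`), let
`ω = x₀ ∧ ⋯ ∧ x_{k−1}` and `W = {ω ∧ v : v ∈ V}`. Then `W` is a `(k+2)`-dimensional
subspace of `⋀^{k+1} V`, all of whose elements are totally decomposable, and a wedge of
`k+1` linearly independent vectors lies in `W` iff its span contains `span{x₀,…,x_{k−1}}`.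
Thus the `k`-dimensional projective subspaces of `PG(2k+1,F)` through a fixed
`(k−1)`-dimensional projective subspace form a `(k+1)`-dimensional projective subspace
contained in the Plücker embedding of the Grassmannian. -/
theorem schubert_through_fixed_subspace_is_linear {F : Type*} [Field F]
    (k : ℕ) (hk : 1 ≤ k)
    (x : Fin k → (Fin (2 * k + 2) → F))
    (hx : LinearIndependent F x)
    (ω : ExteriorAlgebra F (Fin (2 * k + 2) → F))
    (hω : ω = (List.ofFn fun i => ι F (x i)).prod)
    (W : Submodule F (ExteriorAlgebra F (Fin (2 * k + 2) → F)))
    (hW : W = LinearMap.range ((LinearMap.mulLeft F ω) ∘ₗ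
      (ι F : (Fin (2 * k + 2) → F) →ₗ[F] ExteriorAlgebra F (Fin (2 * k + 2) → F)))) :
    Module.finrank F W = k + 2 ∧
    (∀ w ∈ W, ∃ v : Fin (k + 1) → (Fin (2 * k + 2) → F),
      w = (List.ofFn fun i => ι F (v i)).prod) ∧
    (∀ v : Fin (k + 1) → (Fin (2 * k + 2) → F), LinearIndependent F v →
      ((List.ofFn fun i => ι F (v i)).prod ∈ W ↔
        Submodule.span F (Set.range x) ≤ Submodule.span F (Set.range v))) :=
  schubert_through_fixed_subspace_is_linear_general k x hx ω hω W hW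
end

section
/- Let F be a field, let V be a finite-dimensional F-vector space, and let x ⊆ y ⊆ V be subspaces with dim x = k and dim y = k+s+1 (so ℙ(x) has projective dimension k−1 and ℙ(y) has projective dimension k+s). Fix a basis x_0,…,x_{k−1} of x, let ω = x_0 ∧ ⋯ ∧ x_{k−1}, and let W = {ω ∧ v : v ∈ y} ⊆ ⋀^{k+1} V. Then: (i) W has dimension s+1; (ii) every element of W is totally decomposable; (iii) for linearly independent v_0,…,v_k ∈ V, the vector v_0 ∧ ⋯ ∧ v_k lies in W if and only if x ⊆ span{v_0,…,v_k} ⊆ y. In other words, the set of k-dimensional projective subspaces of ℙ(V) containing ℙ(x) and contained in ℙ(y) corresponds to the points of an s-dimensional projective subspace contained in the Plücker embedding of the Grassmannian. -/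
/-!
The kernel of `v ↦ ω ∧ v` is exactly `x`, because `x₀ ∧ ⋯ ∧ x_{k-1} ∧ v` vanishes iff the
vectors are dependent; rank–nullity on `y` then gives `dim W = (k+s+1) - k`, and every
`ω ∧ v` is visibly decomposable. A nonzero decomposable `(k+1)`-vector determines its span
`U` (as the set of `w` with `w ∧ v₀ ∧ ⋯ ∧ v_k = 0`), so `ω ∧ u = v₀ ∧ ⋯ ∧ v_k` forces
`U = x + F u`, which lies between `x` and `y`. Conversely, if `x ⊆ U ⊆ y`, pick `u ∈ U ∖ x`:
then `x₀, …, x_{k-1}, u` is a basis of `U`, and any two bases of `U` have proportional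
wedges, so `v₀ ∧ ⋯ ∧ v_k = c (ω ∧ u) = ω ∧ (c u)` with `c u ∈ y`.
-/

theorem AlternatingMap.apply_eq_basis_det_smul {R M N ι : Type*} [CommRing R]
    [AddCommGroup M] [Module R M] [AddCommGroup N] [Module R N] [Module.Projective R N]
    [Fintype ι] [DecidableEq ι] (e : Module.Basis ι R M) (f : M [⋀^ι]→ₗ[R] N) (m : ι → M) :
    f m = e.det m • f e := by
  rw [← sub_eq_zero, ← Module.forall_dual_apply_eq_zero_iff R]
  intro φ
  have h := congr($((φ.compAlternatingMap f).eq_smul_basis_det e) m)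
  simp only [LinearMap.compAlternatingMap_apply, AlternatingMap.smul_apply, smul_eq_mul] at h
  rw [map_sub, map_smul, h, smul_eq_mul, mul_comm, sub_self]

namespace ExteriorAlgebra

section CommRing

variable {R M : Type*} [CommRing R] [AddCommGroup M] [Module R M]

def wedgeLeft (ω : ExteriorAlgebra R M) : M →ₗ[R] ExteriorAlgebra R M :=
  LinearMap.mulLeft R ω ∘ₗ ι R

theorem wedgeLeft_apply (ω : ExteriorAlgebra R M) (u : M) : wedgeLeft ω u = ω * ι R u :=
  rfl

theorem wedgeLeft_ιMulti_apply {n : ℕ} (b : Fin n → M) (u : M) :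
    wedgeLeft (ιMulti R n b) u = ιMulti R (n + 1) (Fin.snoc b u) := by
  rw [wedgeLeft_apply, ιMulti_apply, ιMulti_apply, List.ofFn_succ', List.prod_concat]
  simp [Fin.snoc_castSucc, Fin.snoc_last]

theorem ι_mul_ιMulti {n : ℕ} (w : M) (v : Fin n → M) :
    ι R w * ιMulti R n v = ιMulti R (n + 1) (Fin.cons w v) := by
  rw [ιMulti_succ_apply]
  rfl

end CommRing

variable {F V : Type*} [Field F] [AddCommGroup V] [Module F V]

theorem ιMulti_ne_zero {n : ℕ} {v : Fin n → V} (hv : LinearIndependent F v) :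
    ιMulti F n v ≠ 0 := by
  -- `v₀ ∧ ⋯ ∧ v_{n-1}` is the member of the independent family of `n`-fold wedges of `v`
  -- indexed by the unique `n`-subset of `Fin n`
  have h := (exteriorPower.ιMulti_family_linearIndependent_field (n := n) hv).ne_zero
    (Set.powersetCard.ofFinEmbEquiv (OrderIso.refl (Fin n)).toOrderEmbedding)
  rw [Ne, ← Submodule.coe_eq_zero, exteriorPower.ιMulti_family_apply_coe] at h
  simpa [ExteriorAlgebra.ιMulti_family] using h

theorem ιMulti_eq_zero_iff {n : ℕ} {v : Fin n → V} :
    ιMulti F n v = 0 ↔ ¬LinearIndependent F v :=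
  ⟨fun h hv => ιMulti_ne_zero hv h, (ιMulti F n).map_linearDependent v⟩

theorem ι_mul_ιMulti_eq_zero_iff {n : ℕ} {v : Fin n → V} (hv : LinearIndependent F v) (w : V) :
    ι F w * ιMulti F n v = 0 ↔ w ∈ Submodule.span F (Set.range v) := by
  rw [ι_mul_ιMulti, ιMulti_eq_zero_iff, linearIndependent_finCons]
  tauto

theorem span_eq_of_ιMulti_eq {n : ℕ} {v v' : Fin n → V} (hv : LinearIndependent F v)
    (h : ιMulti F n v = ιMulti F n v') :
    Submodule.span F (Set.range v) = Submodule.span F (Set.range v') := by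
  have hv' : LinearIndependent F v' := by
    by_contra hv'
    exact ιMulti_ne_zero hv (h.trans (ιMulti_eq_zero_iff.2 hv'))
  ext w
  rw [← ι_mul_ιMulti_eq_zero_iff hv, ← ι_mul_ιMulti_eq_zero_iff hv', h]

theorem exists_ιMulti_eq_smul_of_mem_span {n : ℕ} {b v : Fin n → V}
    (hb : LinearIndependent F b) (hv : ∀ i, v i ∈ Submodule.span F (Set.range b)) :
    ∃ c : F, ιMulti F n v = c • ιMulti F n b := by
  let U := Submodule.span F (Set.range b)
  let e : Module.Basis (Fin n) F U := .span hb
  have he : (fun i => U.subtype (e i)) = b :=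
    funext fun i => congrArg Subtype.val (Module.Basis.span_apply hb i)
  refine ⟨e.det fun i => ⟨v i, hv i⟩, ?_⟩
  have h := ((ιMulti F n).compLinearMap U.subtype).apply_eq_basis_det_smul e fun i => ⟨v i, hv i⟩
  rw [AlternatingMap.compLinearMap_apply, AlternatingMap.compLinearMap_apply, he] at h
  exact h

theorem ker_wedgeLeft_ιMulti {k : ℕ} {b : Fin k → V} (hb : LinearIndependent F b) :
    LinearMap.ker (wedgeLeft (ιMulti F k b)) = Submodule.span F (Set.range b) := by
  ext u
  rw [LinearMap.mem_ker, wedgeLeft_ιMulti_apply, ιMulti_eq_zero_iff, linearIndependent_finSnoc]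
  simp [hb]

theorem finrank_map_wedgeLeft_ιMulti_add {k : ℕ} {b : Fin k → V} (hb : LinearIndependent F b)
    {y : Submodule F V} [Module.Finite F y] (hby : Submodule.span F (Set.range b) ≤ y) :
    Module.finrank F (y.map (wedgeLeft (ιMulti F k b))) + k = Module.finrank F y := by
  have h := LinearMap.finrank_range_add_finrank_ker (wedgeLeft (ιMulti F k b) ∘ₗ y.subtype)
  rwa [LinearMap.range_comp, Submodule.range_subtype, LinearMap.ker_comp, ker_wedgeLeft_ιMulti hb,
    (Submodule.comapSubtypeEquivOfLe hby).finrank_eq, finrank_span_eq_card hb,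
    Fintype.card_fin] at h

theorem exists_wedgeLeft_ιMulti_eq {k : ℕ} {b : Fin k → V} {v : Fin (k + 1) → V}
    (hb : LinearIndependent F b) (hv : LinearIndependent F v)
    (hbv : Submodule.span F (Set.range b) ≤ Submodule.span F (Set.range v)) :
    ∃ u ∈ Submodule.span F (Set.range v), wedgeLeft (ιMulti F k b) u = ιMulti F (k + 1) v := by
  have := FiniteDimensional.span_of_finite F (Set.finite_range v)
  have hv_finrank := finrank_span_eq_card hv
  have hlt : Submodule.span F (Set.range b) < Submodule.span F (Set.range v) := by
    refine lt_of_le_of_ne hbv fun heq => ?_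
    have hb_finrank := finrank_span_eq_card hb
    rw [heq, hv_finrank] at hb_finrank
    simp at hb_finrank
  obtain ⟨u, huv, hub⟩ := SetLike.exists_of_lt hlt
  have hbu : LinearIndependent F (Fin.snoc b u) := linearIndependent_finSnoc.2 ⟨hb, hub⟩
  have hspan : Submodule.span F (Set.range (Fin.snoc b u)) = Submodule.span F (Set.range v) := by
    refine Submodule.eq_of_le_of_finrank_eq ?_ (by rw [finrank_span_eq_card hbu, hv_finrank])
    rw [Fin.range_snoc, Submodule.span_le]
    exact Set.insert_subset huv (Submodule.span_le.1 hbv)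
  obtain ⟨c, hc⟩ := exists_ιMulti_eq_smul_of_mem_span (v := v) hbu
    fun i => hspan ▸ Submodule.subset_span (Set.mem_range_self i)
  exact ⟨c • u, Submodule.smul_mem _ c huv, by rw [map_smul, wedgeLeft_ιMulti_apply, hc]⟩

theorem ιMulti_mem_map_wedgeLeft_ιMulti_iff {k : ℕ} {b : Fin k → V} {v : Fin (k + 1) → V}
    (hb : LinearIndependent F b) (hv : LinearIndependent F v) {y : Submodule F V}
    (hby : Submodule.span F (Set.range b) ≤ y) :
    ιMulti F (k + 1) v ∈ y.map (wedgeLeft (ιMulti F k b)) ↔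
      Submodule.span F (Set.range b) ≤ Submodule.span F (Set.range v) ∧
        Submodule.span F (Set.range v) ≤ y := by
  constructor
  · rintro ⟨u, huy, h⟩
    rw [wedgeLeft_ιMulti_apply] at h
    rw [span_eq_of_ιMulti_eq hv h.symm, Fin.range_snoc, Submodule.span_le, Submodule.span_le]
    exact ⟨(Set.subset_insert u _).trans Submodule.subset_span,
      Set.insert_subset huy (Submodule.span_le.1 hby)⟩
  · rintro ⟨hbv, hvy⟩
    obtain ⟨u, huv, h⟩ := exists_wedgeLeft_ιMulti_eq hb hv hbv
    exact ⟨u, hvy huv, h⟩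

end ExteriorAlgebra

open ExteriorAlgebra in
theorem schubert_between_fixed_subspaces_is_linear_general {F : Type*} [Field F]
    {V : Type*} [AddCommGroup V] [Module F V]
    (k s : ℕ) (x y : Submodule F V) (hxy : x ≤ y)
    (hy : Module.finrank F y = k + s + 1)
    (xv : Fin k → V)
    (hxvind : LinearIndependent F xv)
    (hxvspan : Submodule.span F (Set.range xv) = x)
    (ω : ExteriorAlgebra F V)
    (hω : ω = (List.ofFn fun i => ι F (xv i)).prod)
    (W : Submodule F (ExteriorAlgebra F V))
    (hW : W = Submodule.map ((LinearMap.mulLeft F ω) ∘ₗ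
      (ι F : V →ₗ[F] ExteriorAlgebra F V)) y) :
    Module.finrank F W = s + 1 ∧
    (∀ w ∈ W, ∃ v : Fin (k + 1) → V, w = (List.ofFn fun i => ι F (v i)).prod) ∧
    (∀ v : Fin (k + 1) → V, LinearIndependent F v →
      ((List.ofFn fun i => ι F (v i)).prod ∈ W ↔
        x ≤ Submodule.span F (Set.range v) ∧ Submodule.span F (Set.range v) ≤ y)) := by
  rw [← ιMulti_apply] at hω
  subst hω hxvspan
  have hW' : W = y.map (wedgeLeft (ιMulti F k xv)) := hW
  subst hW'
  have : Module.Finite F y := Module.finite_of_finrank_pos (by omega)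
  refine ⟨?_, ?_, fun v hv => ?_⟩
  · have h := finrank_map_wedgeLeft_ιMulti_add hxvind hxy
    omega
  · rintro _ ⟨u, -, rfl⟩
    exact ⟨Fin.snoc xv u, by rw [wedgeLeft_ιMulti_apply, ιMulti_apply]⟩
  · rw [← ιMulti_apply]
    exact ιMulti_mem_map_wedgeLeft_ιMulti_iff hxvind hv hxy

open ExteriorAlgebra in
/-- Let `x ⊆ y ⊆ V` with `dim x = k` and `dim y = k+s+1`, fix a basis `x₀,…,x_{k−1}` of
`x`, let `ω = x₀ ∧ ⋯ ∧ x_{k−1}` and `W = {ω ∧ v : v ∈ y} ⊆ ⋀^{k+1} V`. Then `W` has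
dimension `s+1`, all its elements are totally decomposable, and a wedge of `k+1` linearly
independent vectors lies in `W` iff its span contains `x` and is contained in `y`. Thus
the `k`-dimensional projective subspaces of `ℙ(V)` containing `ℙ(x)` and contained in
`ℙ(y)` correspond to the points of an `s`-dimensional projective subspace contained in the
Plücker embedding of the Grassmannian. -/
theorem schubert_between_fixed_subspaces_is_linear {F : Type*} [Field F]
    {V : Type*} [AddCommGroup V] [Module F V] [FiniteDimensional F V]
    (k s : ℕ) (x y : Submodule F V) (hxy : x ≤ y)
    (hx : Module.finrank F x = k) (hy : Module.finrank F y = k + s + 1)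
    (xv : Fin k → V) (hxv : ∀ i, xv i ∈ x)
    (hxvind : LinearIndependent F xv)
    (hxvspan : Submodule.span F (Set.range xv) = x)
    (ω : ExteriorAlgebra F V)
    (hω : ω = (List.ofFn fun i => ι F (xv i)).prod)
    (W : Submodule F (ExteriorAlgebra F V))
    (hW : W = Submodule.map ((LinearMap.mulLeft F ω) ∘ₗ
      (ι F : V →ₗ[F] ExteriorAlgebra F V)) y) :
    Module.finrank F W = s + 1 ∧
    (∀ w ∈ W, ∃ v : Fin (k + 1) → V, w = (List.ofFn fun i => ι F (v i)).prod) ∧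
    (∀ v : Fin (k + 1) → V, LinearIndependent F v →
      ((List.ofFn fun i => ι F (v i)).prod ∈ W ↔
        x ≤ Submodule.span F (Set.range v) ∧ Submodule.span F (Set.range v) ≤ y)) :=
  schubert_between_fixed_subspaces_is_linear_general k s x y hxy hy xv hxvind hxvspan ω hω W hW
end

section
/- Let F be a field, V = F^{n+1}, and let x ⊆ V be a subspace with dim x = b+1 where δ ≤ b ≤ k ≤ n. Let A_0 ⊆ A_1 ⊆ ⋯ ⊆ A_k be a flag of subspaces of V such that A_δ = x, dim A_i = (b+1) − (δ−i) for 0 ≤ i ≤ δ, and dim A_i = (n+1) − (k−i) for δ ≤ i ≤ k (so A_k = V). Then for every subspace X ⊆ V with dim X = k+1: dim(X ∩ A_i) ≥ i+1 for all i ∈ {0,…,k} if and only if dim(X ∩ x) ≥ δ+1. Consequently, the Schubert variety Ω(F(x,δ,k)) defined by any such flag equals the set of (k+1)-dimensional subspaces of V meeting x in a subspace of dimension at least δ+1, independently of the chosen flag. -/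
/-- Let `x ⊆ V = F^{n+1}` with `dim x = b+1`, `δ ≤ b ≤ k ≤ n`, and let
`A₀ ⊆ ⋯ ⊆ A_k` be a flag with `A_δ = x`, `dim A_i = (b+1) − (δ−i)` for `i ≤ δ` and
`dim A_i = (n+1) − (k−i)` for `δ ≤ i ≤ k`. Then a `(k+1)`-dimensional subspace `X`
satisfies the Schubert conditions `dim(X ∩ A_i) ≥ i+1` for all `i` iff
`dim(X ∩ x) ≥ δ+1`; hence the Schubert variety defined by any such flag is the set of
`(k+1)`-dimensional subspaces meeting `x` in dimension at least `δ+1`. -/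
theorem schubert_variety_flag_independent {F : Type*} [Field F]
    (n k b δ : ℕ) (hδb : δ ≤ b) (hbk : b ≤ k) (hkn : k ≤ n)
    (x : Submodule F (Fin (n + 1) → F)) (hx : Module.finrank F x = b + 1)
    (A : Fin (k + 1) → Submodule F (Fin (n + 1) → F))
    (hmono : Monotone A)
    (hAδ : A ⟨δ, by omega⟩ = x)
    (hlow : ∀ i : Fin (k + 1), (i : ℕ) ≤ δ →
      Module.finrank F (A i) = (b + 1) - (δ - (i : ℕ)))
    (hhigh : ∀ i : Fin (k + 1), δ ≤ (i : ℕ) →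
      Module.finrank F (A i) = (n + 1) - (k - (i : ℕ)))
    (X : Submodule F (Fin (n + 1) → F)) (hX : Module.finrank F X = k + 1) :
    (∀ i : Fin (k + 1), (i : ℕ) + 1 ≤ Module.finrank F ↥(X ⊓ A i)) ↔
      δ + 1 ≤ Module.finrank F ↥(X ⊓ x) := by
  have hV : Module.finrank F (Fin (n + 1) → F) = n + 1 := by simp
  constructor
  · intro h
    have := h ⟨δ, by omega⟩
    rwa [hAδ] at this
  · intro h i
    rcases le_or_gt (i : ℕ) δ with hle | hlt
    · have hAi : A i ≤ x := by
        rw [← hAδ]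
        exact hmono (by simpa [Fin.le_def] using hle)
      have hinf : X ⊓ A i = (X ⊓ x) ⊓ A i := by
        rw [inf_assoc, inf_eq_right.mpr hAi]
      have hsup : Module.finrank F ↥((X ⊓ x) ⊔ A i) ≤ b + 1 := by
        rw [← hx]
        exact Submodule.finrank_mono (sup_le inf_le_right hAi)
      have heq := Submodule.finrank_sup_add_finrank_inf_eq (X ⊓ x) (A i)
      have hAi' := hlow i hle
      rw [hinf]
      omega
    · have hsup : Module.finrank F ↥(X ⊔ A i) ≤ n + 1 := by
        exact (Submodule.finrank_le _).trans hV.le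
      have heq := Submodule.finrank_sup_add_finrank_inf_eq X (A i)
      have hAi' := hhigh i hlt.le
      omega
end

section
/- Let F be a field, V = F^{n+1}, and let x ⊆ V be a subspace with dim x = b+1, where δ ≤ b ≤ k ≤ n. Let W ⊆ ⋀^{k+1} V be the subspace spanned by all vectors of the form u_0 ∧ ⋯ ∧ u_δ ∧ w_{δ+1} ∧ ⋯ ∧ w_k with u_0,…,u_δ ∈ x and w_{δ+1},…,w_k ∈ V. Then dim W = Σ_{d=δ}^{b} C(b+1, d+1)·C(n−b, k−d), where C(·,·) denotes the binomial coefficient. -/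
/-!
Choose a basis `e` of `V` whose vectors indexed by `X`, `#X = b + 1`, span `x`. Expanding
multilinearly, the wedges `u₀ ∧ ⋯ ∧ u_δ` with `uᵢ ∈ x` span the same space as the `e_T` with
`T ⊆ X`, `#T = δ + 1`, and all `(k - δ)`-fold wedges span that of the `e_U` with `#U = k - δ`.
A product `e_T ∧ e_U` is `0` or `±e_{T ∪ U}`, and every `(k + 1)`-set `S` with
`#(S ∩ X) ≥ δ + 1` splits as such a `T ∪ U`. So `W` is spanned by these `e_S`, which are part of
a basis of the exterior algebra; sorting them by `#(S ∩ X) = d + 1` counts them.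
-/

open Finset Submodule Module Set.powersetCard
open scoped Pointwise

namespace ExteriorAlgebra

variable {R M I : Type*} [CommRing R] [AddCommGroup M] [Module R M] [LinearOrder I]
  (b : Basis I R M)

theorem ιMulti_basis_comp_eq_sign_smul {p : ℕ} {α : Fin p → I} (hα : Function.Injective α) :
    ∃ σ : Equiv.Perm (Fin p), ιMulti R p (b ∘ α) = σ.sign • b.ExteriorAlgebra (univ.image α) := by
  have hcard : #(univ.image α) = p := by simp [card_image_of_injective _ hα]
  set e := (univ.image α).orderEmbOfFin hcard
  have hmem : ∀ j, α j ∈ Set.range e := by simp [e, Finset.range_orderEmbOfFin]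
  choose τ hτ using hmem
  have hτ_inj : Function.Injective τ := fun i j h => hα (by rw [← hτ i, ← hτ j, h])
  let σ := Equiv.ofBijective τ (Finite.injective_iff_bijective.mp hτ_inj)
  refine ⟨σ, ?_⟩
  have hfactor : b ∘ α = (b ∘ e) ∘ σ := funext fun j => by simp [σ, hτ]
  rw [hfactor, AlternatingMap.map_perm, basis_apply_ofCard b hcard]
  rfl

theorem exists_basis_mul_basis_eq_smul_union {T U : Finset I} (h : Disjoint T U) :
    ∃ ε : ℤˣ, b.ExteriorAlgebra T * b.ExteriorAlgebra U = ε • b.ExteriorAlgebra (T ∪ U) := by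
  have hmul := basis_mul_of_disjoint b (ofCard (s := T) rfl) (ofCard (s := U) rfl) h
  rw [show (Set.powersetCard.disjUnion (s := ofCard (s := T) rfl) (t := ofCard (s := U) rfl) h).val
    = T ∪ U from disjUnion_eq_union T U h] at hmul
  exact ⟨_, hmul⟩

theorem span_ιMulti_mem_span_basis_image (X : Finset I) (p : ℕ) :
    span R (ιMulti R p '' {u | ∀ i, u i ∈ span R (b '' X)}) =
      span R (b.ExteriorAlgebra '' {T | T ⊆ X ∧ #T = p}) := by
  apply le_antisymm
  · rw [span_le]
    rintro _ ⟨u, hu, rfl⟩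
    have hexp : u = fun i => ∑ j ∈ X, b.repr (u i) j • b j := by
      funext i
      conv_lhs => rw [← b.linearCombination_repr (u i)]
      rw [Finsupp.linearCombination_apply]
      exact Finsupp.sum_of_support_subset _ (b.mem_span_image.mp (hu i)) _ (by simp)
    rw [hexp, SetLike.mem_coe, ← AlternatingMap.coe_multilinearMap,
      MultilinearMap.map_sum_finset]
    refine sum_mem fun r hr => ?_
    rw [MultilinearMap.map_smul_univ, AlternatingMap.coe_multilinearMap]
    refine smul_mem _ _ ?_
    by_cases hr_inj : Function.Injective r
    · obtain ⟨σ, hσ⟩ := ιMulti_basis_comp_eq_sign_smul b hr_inj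
      rw [show (fun i => b (r i)) = b ∘ r from rfl, hσ, Units.smul_def]
      refine zsmul_mem (subset_span (Set.mem_image_of_mem _ ?_)) _
      exact ⟨by simpa [image_subset_iff] using hr, by simp [card_image_of_injective _ hr_inj]⟩
    · rw [AlternatingMap.map_eq_zero_of_not_injective]
      · exact zero_mem _
      · exact fun h => hr_inj h.of_comp
  · rw [span_le]
    rintro _ ⟨T, ⟨hTX, hT⟩, rfl⟩
    exact subset_span ⟨_, fun i => subset_span ⟨_, hTX (T.orderEmbOfFin_mem hT i), rfl⟩,
      (basis_apply_ofCard b hT).symm⟩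

theorem span_range_ιMulti_eq_span_basis_image [Fintype I] (p : ℕ) :
    span R (Set.range (ιMulti R p)) = span R (b.ExteriorAlgebra '' {U | #U = p}) := by
  simpa [b.span_eq] using span_ιMulti_mem_span_basis_image b univ p

theorem span_basis_mul_span_basis (X : Finset I) (p q : ℕ) :
    span R (b.ExteriorAlgebra '' {T | T ⊆ X ∧ #T = p}) *
        span R (b.ExteriorAlgebra '' {U | #U = q}) =
      span R (b.ExteriorAlgebra '' {S | #S = p + q ∧ p ≤ #(S ∩ X)}) := by
  rw [span_mul_span]
  apply le_antisymm
  · rw [span_le]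
    rintro _ ⟨_, ⟨T, ⟨hTX, hT⟩, rfl⟩, _, ⟨U, hU, rfl⟩, rfl⟩
    show b.ExteriorAlgebra T * b.ExteriorAlgebra U ∈ _
    by_cases hTU : Disjoint T U
    · obtain ⟨ε, hε⟩ := exists_basis_mul_basis_eq_smul_union b hTU
      rw [hε, Units.smul_def]
      apply zsmul_mem
      refine subset_span ⟨T ∪ U, ⟨?_, ?_⟩, rfl⟩
      · rw [card_union_of_disjoint hTU, hT, hU]
      · exact hT ▸ card_le_card (subset_inter subset_union_left hTX)
    · rw [show b.ExteriorAlgebra T * b.ExteriorAlgebra U = 0 from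
        basis_mul_of_not_disjoint b (ofCard (s := T) rfl) (ofCard (s := U) rfl) hTU]
      exact zero_mem _
  · rw [span_le]
    rintro _ ⟨S, ⟨hS, hSX⟩, rfl⟩
    obtain ⟨T, hTSX, hT⟩ := exists_subset_card_eq hSX
    have hTS : T ⊆ S := hTSX.trans inter_subset_left
    obtain ⟨ε, hε⟩ := exists_basis_mul_basis_eq_smul_union b (disjoint_sdiff (s := T) (t := S))
    rw [union_sdiff_of_subset hTS, eq_comm, ← eq_inv_smul_iff, Units.smul_def] at hε
    rw [hε]
    apply zsmul_mem
    refine subset_span ⟨_, ⟨T, ⟨hTSX.trans inter_subset_right, hT⟩, rfl⟩, _, ⟨S \ T, ?_, rfl⟩, rfl⟩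
    rw [Set.mem_ofPred_eq, card_sdiff_of_subset hTS]
    omega

end ExteriorAlgebra

theorem Module.Basis.finrank_span_image_finset {K M ι : Type*} [Field K] [AddCommGroup M]
    [Module K M] (b : Basis ι K M) (s : Finset ι) : finrank K (span K (b '' s)) = #s := by
  rw [Set.image_eq_range]
  exact (finrank_span_eq_card (b.linearIndependent.comp _ Subtype.val_injective)).trans
    (Fintype.card_coe s)

theorem Submodule.exists_basis_span_image_range_castAdd {K V : Type*} [Field K] [AddCommGroup V]
    [Module K V] [FiniteDimensional K V] (x : Submodule K V) {r : ℕ} (hx : finrank K x = r) :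
    ∃ (s : ℕ) (v : Basis (Fin (r + s)) K V), span K (v '' Set.range (Fin.castAdd s)) = x := by
  obtain ⟨y, hxy⟩ := x.exists_isCompl
  let bx := finBasisOfFinrankEq K x hx
  let v := ((bx.prod (finBasis K y)).map (x.prodEquivOfIsCompl y hxy)).reindex finSumFinEquiv
  have hv : v ∘ Fin.castAdd (finrank K y) = x.subtype ∘ bx := funext fun i => by simp [v]
  refine ⟨_, v, ?_⟩
  rw [← Set.range_comp, hv, Set.range_comp, ← Submodule.map_span, bx.span_eq, map_subtype_top]

namespace Finset

variable {I : Type*} [Fintype I] [DecidableEq I]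

theorem card_filter_card_eq_card_inter_eq (X : Finset I) (p q : ℕ) :
    #{S : Finset I | #S = p + q ∧ #(S ∩ X) = p} = (#X).choose p * (#Xᶜ).choose q := by
  rw [← card_powersetCard, ← card_powersetCard, ← card_product]
  refine card_nbij' (fun S => (S ∩ X, S \ X)) (fun P => P.1 ∪ P.2) ?_ ?_ ?_ ?_
  · intro S hS
    simp only [coe_filter, mem_univ, true_and, Set.mem_ofPred_eq] at hS
    have hsplit := card_sdiff_add_card_inter S X
    simp only [coe_product, Set.mem_prod, mem_coe, mem_powersetCard]
    exact ⟨⟨inter_subset_right, hS.2⟩, fun a ha => mem_compl.mpr (mem_sdiff.mp ha).2, by omega⟩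
  · rintro ⟨A, B⟩ hAB
    simp only [coe_product, Set.mem_prod, mem_coe, mem_powersetCard] at hAB
    obtain ⟨⟨hAX, hA⟩, hBX, hB⟩ := hAB
    have hdisj : Disjoint A B := disjoint_of_subset_right hBX (disjoint_compl_right.mono_left hAX)
    have hinter : (A ∪ B) ∩ X = A := by
      rw [union_inter_distrib_right, inter_eq_left.mpr hAX,
        disjoint_iff_inter_eq_empty.mp (disjoint_of_subset_left hBX disjoint_compl_left),
        union_empty]
    simp [card_union_of_disjoint hdisj, hinter, hA, hB]
  · intro S _
    exact sup_inf_sdiff S X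
  · rintro ⟨A, B⟩ hAB
    simp only [coe_product, Set.mem_prod, mem_coe, mem_powersetCard] at hAB
    obtain ⟨⟨hAX, -⟩, hBX, -⟩ := hAB
    ext a <;> simp <;> grind [mem_compl]

theorem card_filter_card_eq_le_card_inter (X : Finset I) {m : ℕ} (p : ℕ) (hX : #X ≤ m) :
    #{S : Finset I | #S = m ∧ p ≤ #(S ∩ X)} =
      ∑ j ∈ Icc p #X, (#X).choose j * (#Xᶜ).choose (m - j) := by
  rw [card_eq_sum_card_fiberwise (f := fun S => #(S ∩ X)) (t := Icc p #X)]
  · refine sum_congr rfl fun j hj => ?_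
    rw [mem_Icc] at hj
    rw [filter_filter, ← card_filter_card_eq_card_inter_eq X j (m - j)]
    congr 2
    ext S
    constructor
    · rintro ⟨⟨hS, -⟩, hSX⟩
      exact ⟨by omega, hSX⟩
    · rintro ⟨hS, hSX⟩
      exact ⟨⟨by omega, by omega⟩, hSX⟩
  · intro S hS
    simp only [coe_filter, mem_univ, true_and, Set.mem_ofPred_eq] at hS
    exact mem_Icc.mpr ⟨hS.2, card_le_card inter_subset_right⟩

end Finset

open ExteriorAlgebra in
theorem dim_schubert_linear_span_general {F : Type*} [Field F]
    (n k b δ : ℕ) (hδb : δ ≤ b) (hbk : b ≤ k)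
    (x : Submodule F (Fin (n + 1) → F)) (hx : Module.finrank F x = b + 1)
    (W : Submodule F (ExteriorAlgebra F (Fin (n + 1) → F)))
    (hW : W = Submodule.span F {w : ExteriorAlgebra F (Fin (n + 1) → F) |
      ∃ (u : Fin (δ + 1) → (Fin (n + 1) → F)) (t : Fin (k - δ) → (Fin (n + 1) → F)),
        (∀ i, u i ∈ x) ∧
        w = ((List.ofFn fun i => ι F (u i)) ++ (List.ofFn fun i => ι F (t i))).prod}) :
    Module.finrank F W =
      ∑ d ∈ Finset.Icc δ b, Nat.choose (b + 1) (d + 1) * Nat.choose (n - b) (k - d) := by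
  obtain ⟨s, v, hv⟩ := x.exists_basis_span_image_range_castAdd hx
  have hs : b + 1 + s = n + 1 := by simpa using (finrank_eq_card_basis v).symm
  set X : Finset (Fin (b + 1 + s)) := univ.map (Fin.castAddEmb s)
  have hXcard : #X = b + 1 := by simp [X]
  have hXcompl : #Xᶜ = n - b := by rw [card_compl, hXcard, Fintype.card_fin]; omega
  have hWmul : W = span F (ιMulti F (δ + 1) '' {u | ∀ i, u i ∈ x} *
      Set.range (ιMulti F (k - δ) (M := Fin (n + 1) → F))) := by
    rw [hW]
    congr 1
    ext w
    simp only [Set.mem_ofPred_eq, Set.mem_mul, Set.mem_image, Set.mem_range, ιMulti_apply,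
      List.prod_append]
    constructor
    · rintro ⟨u, t, hu, rfl⟩
      exact ⟨_, ⟨u, hu, rfl⟩, _, ⟨t, rfl⟩, rfl⟩
    · rintro ⟨_, ⟨u, hu, rfl⟩, _, ⟨t, rfl⟩, rfl⟩
      exact ⟨u, t, hu, rfl⟩
  rw [hWmul, ← span_mul_span, ← hv, show Set.range (Fin.castAdd s) = (X : Set _) by simp [X],
    span_ιMulti_mem_span_basis_image v, span_range_ιMulti_eq_span_basis_image v,
    span_basis_mul_span_basis v, ← coe_filter_univ, v.ExteriorAlgebra.finrank_span_image_finset,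
    card_filter_card_eq_le_card_inter X _ (by omega), hXcard, hXcompl, ← map_add_right_Icc, sum_map]
  refine sum_congr rfl fun d hd => ?_
  rw [mem_Icc] at hd
  simp only [addRightEmbedding_apply]
  congr 2
  omega

open ExteriorAlgebra in
/-- Let `x ⊆ V = F^{n+1}` with `dim x = b+1`, `δ ≤ b ≤ k ≤ n`, and let `W ⊆ ⋀^{k+1} V` be
the span of all wedges `u₀ ∧ ⋯ ∧ u_δ ∧ w_{δ+1} ∧ ⋯ ∧ w_k` with `u_i ∈ x` and `w_j ∈ V`.
Then `dim W = Σ_{d=δ}^{b} C(b+1, d+1)·C(n−b, k−d)`. -/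
theorem dim_schubert_linear_span {F : Type*} [Field F]
    (n k b δ : ℕ) (hδb : δ ≤ b) (hbk : b ≤ k) (hkn : k ≤ n)
    (x : Submodule F (Fin (n + 1) → F)) (hx : Module.finrank F x = b + 1)
    (W : Submodule F (ExteriorAlgebra F (Fin (n + 1) → F)))
    (hW : W = Submodule.span F {w : ExteriorAlgebra F (Fin (n + 1) → F) |
      ∃ (u : Fin (δ + 1) → (Fin (n + 1) → F)) (t : Fin (k - δ) → (Fin (n + 1) → F)),
        (∀ i, u i ∈ x) ∧
        w = ((List.ofFn fun i => ι F (u i)) ++ (List.ofFn fun i => ι F (t i))).prod}) :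
    Module.finrank F W =
      ∑ d ∈ Finset.Icc δ b, Nat.choose (b + 1) (d + 1) * Nat.choose (n - b) (k - d) :=
  dim_schubert_linear_span_general n k b δ hδb hbk x hx W hW
end
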